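/- arXiv:2504.18897 — 2 statements merged into one kernel-verified Lean document; each statement's English description precedes it below -/
import Mathlib

section
/- Let P and Q be probability measures on the closed unit ball of R^d such that for every c in the unit sphere S^{d-1} and every mu in [-1,1], the expectation of max(c^T x + mu, 0) under P equals that under Q. Then for every c in S^{d-1} and every t in R, P(c^T X <= t) = Q(c^T Y <= t), where X ~ P and Y ~ Q. -/
/-!
Push `P` and `Q` forward along `x ↦ ⟪c, x⟫`; this gives probability measures on `[-1, 1]`.
For such a measure `ν`, the ramp integral `s ↦ ∫ max (y - s) 0 ∂ν` has right derivative
`-ν (Ioi s)`: the difference quotients of the ramp are bounded by `1` and converge pointwise to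
the indicator of `Ioi s`, so dominated convergence applies. Hence the ramp integrals on `[-1, 1]`
determine the tails `ν (Ioi s)` for `s ∈ [-1, 1)`, and the support condition settles the other `s`.
-/

open MeasureTheory
open scoped RealInnerProductSpace

open Set Filter Topology

theorem tendsto_ramp_slope (s y : ℝ) :
    Tendsto (fun h => (max (y - s) 0 - max (y - (s + h)) 0) / h) (𝓝[>] 0)
      (𝓝 ((Ioi s).indicator 1 y)) := by
  rcases lt_or_ge s y with hsy | hys
  · rw [indicator_of_mem (show y ∈ Ioi s from hsy), Pi.one_apply]
    refine tendsto_const_nhds.congr' ?_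
    filter_upwards [Ioo_mem_nhdsGT (sub_pos.2 hsy)] with h ⟨h_pos, h_lt⟩
    rw [max_eq_left (by linarith), max_eq_left (by linarith)]
    field_simp
    ring
  · rw [indicator_of_notMem (show y ∉ Ioi s from not_lt.2 hys)]
    refine tendsto_const_nhds.congr' ?_
    filter_upwards [self_mem_nhdsWithin] with h (h_pos : 0 < h)
    rw [max_eq_right (by linarith), max_eq_right (by linarith)]
    simp

theorem abs_ramp_slope_le_one (s y : ℝ) {h : ℝ} (h_pos : 0 < h) :
    |(max (y - s) 0 - max (y - (s + h)) 0) / h| ≤ 1 := by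
  rw [abs_div, abs_of_pos h_pos, div_le_one h_pos, abs_le]
  constructor
  · linarith [max_le_max (show y - (s + h) ≤ y - s by linarith) (le_refl (0 : ℝ))]
  · rcases le_total (y - s) 0 with hys | hys
    · rw [max_eq_right hys]; linarith [le_max_right (y - (s + h)) 0]
    · rw [max_eq_left hys]; linarith [le_max_left (y - (s + h)) 0]

theorem tendsto_integral_ramp_slope (ν : Measure ℝ) [IsFiniteMeasure ν]
    (hν : ∀ r, Integrable (fun y => max (y - r) 0) ν) (s : ℝ) :
    Tendsto (fun h => ((∫ y, max (y - s) 0 ∂ν) - ∫ y, max (y - (s + h)) 0 ∂ν) / h) (𝓝[>] 0)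
      (𝓝 (ν.real (Ioi s))) := by
  have h_lim : Tendsto (fun h => ∫ y, (max (y - s) 0 - max (y - (s + h)) 0) / h ∂ν) (𝓝[>] 0)
      (𝓝 (∫ y, (Ioi s).indicator 1 y ∂ν)) := by
    refine tendsto_integral_filter_of_dominated_convergence (fun _ => 1) ?_ ?_
      (integrable_const 1) (ae_of_all _ (tendsto_ramp_slope s))
    · exact Eventually.of_forall fun h => by fun_prop
    · filter_upwards [self_mem_nhdsWithin] with h (h_pos : 0 < h)
      exact ae_of_all _ fun y => abs_ramp_slope_le_one s y h_pos
  rw [integral_indicator_one measurableSet_Ioi] at h_lim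
  refine h_lim.congr fun h => ?_
  rw [integral_div, integral_sub (hν s) (hν (s + h))]

theorem integrable_ramp_of_compl_Icc_null {ν : Measure ℝ} [IsFiniteMeasure ν]
    {a b : ℝ} (hν : ν (Icc a b)ᶜ = 0) (r : ℝ) : Integrable (fun y => max (y - r) 0) ν := by
  refine Integrable.of_bound (by fun_prop) (max (b - r) 0) ?_
  filter_upwards [mem_ae_iff.2 hν] with y hy
  rw [Real.norm_of_nonneg (le_max_right _ _)]
  exact max_le_max (by linarith [hy.2]) le_rfl

theorem measureReal_Ioi_eq_of_integral_ramp_eq {ν ν' : Measure ℝ} [IsFiniteMeasure ν]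
    [IsFiniteMeasure ν'] (hν : ∀ r, Integrable (fun y => max (y - r) 0) ν)
    (hν' : ∀ r, Integrable (fun y => max (y - r) 0) ν') {t b : ℝ} (htb : t < b)
    (h : ∀ s ∈ Icc t b, ∫ y, max (y - s) 0 ∂ν = ∫ y, max (y - s) 0 ∂ν') :
    ν.real (Ioi t) = ν'.real (Ioi t) := by
  refine tendsto_nhds_unique ((tendsto_integral_ramp_slope ν hν t).congr' ?_)
    (tendsto_integral_ramp_slope ν' hν' t)
  filter_upwards [Ioo_mem_nhdsGT (sub_pos.2 htb)] with ε ⟨ε_pos, ε_lt⟩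
  rw [h t ⟨le_rfl, htb.le⟩, h (t + ε) ⟨by linarith, by linarith⟩]

theorem measure_Iic_eq_of_integral_ramp_eq {ν ν' : Measure ℝ} [IsProbabilityMeasure ν]
    [IsProbabilityMeasure ν'] {a b : ℝ} (hν : ν (Icc a b)ᶜ = 0) (hν' : ν' (Icc a b)ᶜ = 0)
    (h : ∀ s ∈ Icc a b, ∫ y, max (y - s) 0 ∂ν = ∫ y, max (y - s) 0 ∂ν') (t : ℝ) :
    ν (Iic t) = ν' (Iic t) := by
  rcases lt_or_ge t a with hta | hat
  · have h_null : ∀ μ : Measure ℝ, μ (Icc a b)ᶜ = 0 → μ (Iic t) = 0 := fun μ hμ =>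
      measure_mono_null (t := (Icc a b)ᶜ) (fun y (hy : y ≤ t) hy' => by linarith [hy'.1]) hμ
    rw [h_null ν hν, h_null ν' hν']
  rcases lt_or_ge t b with htb | hbt
  · rw [← compl_Ioi, prob_compl_eq_one_sub measurableSet_Ioi,
      prob_compl_eq_one_sub measurableSet_Ioi]
    congr 1
    exact (ENNReal.toReal_eq_toReal_iff' (measure_ne_top _ _) (measure_ne_top _ _)).1 <|
      measureReal_Ioi_eq_of_integral_ramp_eq (integrable_ramp_of_compl_Icc_null hν)
        (integrable_ramp_of_compl_Icc_null hν') htb fun s hs => h s ⟨hat.trans hs.1, hs.2⟩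
  · have h_full : ∀ μ : Measure ℝ, [IsProbabilityMeasure μ] → μ (Icc a b)ᶜ = 0 →
        μ (Iic t) = 1 := fun μ _ hμ =>
      (prob_compl_eq_zero_iff measurableSet_Iic).1 <|
        measure_mono_null (t := (Icc a b)ᶜ) (fun y hy hy' => hy (hy'.2.trans hbt)) hμ
    rw [h_full ν hν, h_full ν' hν']

theorem map_inner_compl_Icc_eq_zero {E : Type*} [NormedAddCommGroup E] [InnerProductSpace ℝ E]
    [MeasurableSpace E] [OpensMeasurableSpace E] {P : Measure E} {r : ℝ}
    (hP : P (Metric.closedBall 0 r)ᶜ = 0) {c : E} (hc : ‖c‖ ≤ 1) :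
    P.map (fun x => ⟪c, x⟫) (Icc (-r) r)ᶜ = 0 := by
  rw [Measure.map_apply (by fun_prop) measurableSet_Icc.compl]
  refine measure_mono_null (t := (Metric.closedBall 0 r)ᶜ)
    (fun x hx hx_ball => hx (abs_le.1 ?_)) hP
  rw [mem_closedBall_zero_iff] at hx_ball
  calc |⟪c, x⟫| ≤ ‖c‖ * ‖x‖ := abs_real_inner_le_norm c x
    _ ≤ 1 * r := mul_le_mul hc hx_ball (norm_nonneg x) zero_le_one
    _ = r := one_mul r

theorem stmt_2 (d : ℕ) (P Q : Measure (EuclideanSpace ℝ (Fin d)))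
    [IsProbabilityMeasure P] [IsProbabilityMeasure Q]
    (hP : P (Metric.closedBall 0 1)ᶜ = 0) (hQ : Q (Metric.closedBall 0 1)ᶜ = 0)
    (h : ∀ c : EuclideanSpace ℝ (Fin d), ‖c‖ = 1 → ∀ μ ∈ Set.Icc (-1 : ℝ) 1,
      ∫ x, max (⟪c, x⟫ + μ) 0 ∂P = ∫ x, max (⟪c, x⟫ + μ) 0 ∂Q) :
    ∀ c : EuclideanSpace ℝ (Fin d), ‖c‖ = 1 → ∀ t : ℝ,
      P {x | ⟪c, x⟫ ≤ t} = Q {x | ⟪c, x⟫ ≤ t} := by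
  intro c hc t
  have hf : Measurable fun x : EuclideanSpace ℝ (Fin d) => ⟪c, x⟫ := by fun_prop
  have := Measure.isProbabilityMeasure_map (μ := P) hf.aemeasurable
  have := Measure.isProbabilityMeasure_map (μ := Q) hf.aemeasurable
  have h_ramp : ∀ s ∈ Icc (-1 : ℝ) 1, ∫ y, max (y - s) 0 ∂(P.map fun x => ⟪c, x⟫) =
      ∫ y, max (y - s) 0 ∂(Q.map fun x => ⟪c, x⟫) := by
    intro s hs
    rw [integral_map hf.aemeasurable (by fun_prop), integral_map hf.aemeasurable (by fun_prop)]
    simpa only [sub_eq_add_neg] using h c hc (-s) ⟨by linarith [hs.2], by linarith [hs.1]⟩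
  have h_cdf := measure_Iic_eq_of_integral_ramp_eq (map_inner_compl_Icc_eq_zero hP hc.le)
    (map_inner_compl_Icc_eq_zero hQ hc.le) h_ramp t
  rwa [Measure.map_apply hf measurableSet_Iic, Measure.map_apply hf measurableSet_Iic] at h_cdf
end

section
/- Let P and Q be probability measures on the closed unit ball of R^d. The ReLU-IPM d(P,Q) = sup over c in the unit sphere and mu in [-1,1] of |E_P[max(c^T X + mu, 0)] - E_Q[max(c^T Y + mu, 0)]| equals zero if and only if P = Q. -/
/-!
A second-order Taylor expansion on `[a, b]` with remainder `∫ t in a..b, (s - t)₊ • g'' t`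
shows that the integrals of all `C²` functions against a measure concentrated on `[a, b]` are
determined by its ReLU integrals `∫ (s - t)₊`. Applied to `s ↦ exp (i r s)` and to the
projections `x ↦ ⟪c, x⟫` of `P` and `Q`, a vanishing ReLU-IPM forces all one-dimensional
marginals, hence the characteristic functions, of `P` and `Q` to agree.
-/

open MeasureTheory Set Complex
open scoped RealInnerProductSpace

section Taylor

variable {E : Type*} [NormedAddCommGroup E] [NormedSpace ℝ E] [CompleteSpace E]
  {g g' g'' : ℝ → E} {a b : ℝ}

theorem eq_taylor_add_integral_relu_smul (hg : ∀ t, HasDerivAt g (g' t) t)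
    (hg' : ∀ t, HasDerivAt g' (g'' t) t) (hg'' : Continuous g'') {s : ℝ} (hs : s ∈ Icc a b) :
    g s = g a + (s - a) • g' a + ∫ t in a..b, max (s - t) 0 • g'' t := by
  have hg'c : Continuous g' := continuous_iff_continuousAt.2 fun t => (hg' t).continuousAt
  have hkernel : Continuous fun t => max (s - t) 0 • g'' t := by fun_prop
  have hright : ∫ t in s..b, max (s - t) 0 • g'' t = 0 := by
    refine (intervalIntegral.integral_congr fun t ht => ?_).trans intervalIntegral.integral_zero
    rw [uIcc_of_le hs.2] at ht
    simp [max_eq_right (sub_nonpos.2 ht.1)]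
  have hleft : ∫ t in a..s, max (s - t) 0 • g'' t = ∫ t in a..s, (s - t) • g'' t := by
    refine intervalIntegral.integral_congr fun t ht => ?_
    rw [uIcc_of_le hs.1] at ht
    simp only [max_eq_left (sub_nonneg.2 ht.2)]
  have hparts : ∫ t in a..s, (s - t) • g'' t
      = (s - s) • g' s - (s - a) • g' a - ∫ t in a..s, (-1 : ℝ) • g' t :=
    intervalIntegral.integral_smul_deriv_eq_deriv_smul_of_hasDerivAt (by fun_prop)
      hg'c.continuousOn (fun t _ => (hasDerivAt_id t).const_sub s) (fun t _ => hg' t)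
      intervalIntegrable_const (hg''.intervalIntegrable _ _)
  have hftc : ∫ t in a..s, g' t = g s - g a :=
    intervalIntegral.integral_eq_sub_of_hasDerivAt (fun t _ => hg t) (hg'c.intervalIntegrable _ _)
  rw [← intervalIntegral.integral_add_adjacent_intervals (hkernel.intervalIntegrable a s)
    (hkernel.intervalIntegrable s b), hright, hleft, hparts]
  simp only [neg_one_smul, intervalIntegral.integral_neg, hftc, sub_self, zero_smul]
  abel

theorem integral_eq_taylor_add_integral_relu_smul (hg : ∀ t, HasDerivAt g (g' t) t)
    (hg' : ∀ t, HasDerivAt g' (g'' t) t) (hg'' : Continuous g'') (ν : Measure ℝ)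
    [IsFiniteMeasure ν] (hν : ∀ᵐ s ∂ν, s ∈ Icc a b) :
    ∫ s, g s ∂ν = ν.real univ • g a + (∫ s, max (s - a) 0 ∂ν) • g' a
      + ∫ t in a..b, (∫ s, max (s - t) 0 ∂ν) • g'' t := by
  have hν_eq : ν.restrict (Icc a b) = ν := Measure.restrict_eq_self_of_ae_mem hν
  have hkernel : Continuous fun p : ℝ × ℝ => max (p.2 - p.1) 0 • g'' p.1 := by fun_prop
  have hint : Integrable (Function.uncurry fun t s => max (s - t) 0 • g'' t)
      ((volume.restrict (uIoc a b)).prod ν) := by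
    rw [← hν_eq, Measure.prod_restrict]
    exact (hkernel.continuousOn.integrableOn_compact (isCompact_uIcc.prod isCompact_Icc)).mono_set
      (prod_mono uIoc_subset_uIcc subset_rfl)
  have hrelu : Integrable (fun s => max (s - a) 0 • g' a) ν := by
    rw [← hν_eq]
    exact Continuous.continuousOn (by fun_prop) |>.integrableOn_compact isCompact_Icc
  have hremainder : Integrable (fun s => ∫ t in a..b, max (s - t) 0 • g'' t) ν := by
    rw [← hν_eq]
    exact Continuous.continuousOn (by fun_prop) |>.integrableOn_compact isCompact_Icc
  have hlinear : Integrable (fun s => g a + max (s - a) 0 • g' a) ν :=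
    (integrable_const _).add hrelu
  calc ∫ s, g s ∂ν
      = ∫ s, (g a + max (s - a) 0 • g' a + ∫ t in a..b, max (s - t) 0 • g'' t) ∂ν := by
        refine integral_congr_ae ?_
        filter_upwards [hν] with s hs
        rw [max_eq_left (sub_nonneg.2 hs.1)]
        exact eq_taylor_add_integral_relu_smul hg hg' hg'' hs
    _ = _ := by
        rw [integral_add hlinear hremainder, integral_add (integrable_const _) hrelu,
          integral_const, integral_smul_const, ← intervalIntegral_integral_swap hint]
        simp_rw [integral_smul_const]

end Taylor

theorem hasDerivAt_cexp_ofReal_mul_I (r s : ℝ) :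
    HasDerivAt (fun s : ℝ => cexp (r * s * I)) (r * I * cexp (r * s * I)) s := by
  simpa [mul_comm] using ((hasDerivAt_id s).ofReal_comp.const_mul (r : ℂ)).mul_const I |>.cexp

namespace MeasureTheory.Measure

theorem ext_of_integral_relu_eq {ν₁ ν₂ : Measure ℝ} [IsProbabilityMeasure ν₁]
    [IsProbabilityMeasure ν₂] {a b : ℝ} (h₁ : ∀ᵐ s ∂ν₁, s ∈ Icc a b)
    (h₂ : ∀ᵐ s ∂ν₂, s ∈ Icc a b)
    (h : ∀ t ∈ Icc a b, ∫ s, max (s - t) 0 ∂ν₁ = ∫ s, max (s - t) 0 ∂ν₂) : ν₁ = ν₂ := by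
  obtain ⟨s, hs⟩ := h₁.exists
  have hab : a ≤ b := hs.1.trans hs.2
  refine ext_of_charFun (funext fun r => ?_)
  have hg := hasDerivAt_cexp_ofReal_mul_I r
  have hg' : ∀ s : ℝ, HasDerivAt (fun s : ℝ => r * I * cexp (r * s * I))
      (r * I * (r * I * cexp (r * s * I))) s := fun s => (hg s).const_mul _
  have hg'' : Continuous fun s : ℝ => r * I * (r * I * cexp (r * s * I)) := by fun_prop
  rw [charFun_apply_real, charFun_apply_real,
    integral_eq_taylor_add_integral_relu_smul hg hg' hg'' ν₁ h₁,
    integral_eq_taylor_add_integral_relu_smul hg hg' hg'' ν₂ h₂,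
    probReal_univ, probReal_univ, h a ⟨le_rfl, hab⟩]
  congr 1
  refine intervalIntegral.integral_congr fun t ht => ?_
  rw [uIcc_of_le hab] at ht
  simp only [h t ht]

end MeasureTheory.Measure

section InnerProductSpace

variable {E : Type*} [NormedAddCommGroup E] [InnerProductSpace ℝ E] [MeasurableSpace E]

theorem abs_integral_relu_inner_le_two (P : Measure E) [IsProbabilityMeasure P]
    (hP : ∀ᵐ x ∂P, ‖x‖ ≤ 1) {c : E} (hc : ‖c‖ ≤ 1) {μ : ℝ} (hμ : |μ| ≤ 1) :
    |∫ x, max (⟪c, x⟫ + μ) 0 ∂P| ≤ 2 := by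
  have hbound : ∀ᵐ x ∂P, ‖max (⟪c, x⟫ + μ) 0‖ ≤ 2 := by
    filter_upwards [hP] with x hx
    have hinner : |⟪c, x⟫| ≤ 1 :=
      (abs_real_inner_le_norm c x).trans (mul_le_one₀ hc (norm_nonneg x) hx)
    rw [Real.norm_eq_abs, abs_of_nonneg (le_max_right _ _)]
    exact max_le (by linarith [le_abs_self ⟪c, x⟫, le_abs_self μ]) zero_le_two
  simpa using norm_integral_le_of_norm_le_const hbound

variable [BorelSpace E]

theorem charFun_map_inner (μ : Measure E) (c : E) (r : ℝ) :
    charFun (μ.map fun x => ⟪c, x⟫) r = charFun μ (r • c) := by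
  have hinner : Continuous fun x : E => ⟪c, x⟫ := by fun_prop
  rw [charFun_apply, charFun_apply, integral_map hinner.aemeasurable (by fun_prop)]
  simp [inner_smul_right, real_inner_comm, mul_comm]

theorem MeasureTheory.Measure.ext_of_map_inner_eq [CompleteSpace E] [SecondCountableTopology E]
    {P Q : Measure E} [IsProbabilityMeasure P] [IsProbabilityMeasure Q]
    (h : ∀ c : E, ‖c‖ = 1 → P.map (fun x => ⟪c, x⟫) = Q.map (fun x => ⟪c, x⟫)) : P = Q := by
  refine ext_of_charFun (funext fun a => ?_)
  rcases eq_or_ne a 0 with rfl | ha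
  · simp
  have ha' : a = ‖a‖ • (‖a‖⁻¹ • a) := by rw [smul_inv_smul₀ (norm_ne_zero_iff.2 ha)]
  have hc : ‖‖a‖⁻¹ • a‖ = 1 := by
    rw [norm_smul, norm_inv, norm_norm, inv_mul_cancel₀ (norm_ne_zero_iff.2 ha)]
  rw [ha', ← charFun_map_inner, ← charFun_map_inner, h _ hc]

theorem MeasureTheory.Measure.ext_of_integral_relu_inner_eq [CompleteSpace E]
    [SecondCountableTopology E] {P Q : Measure E} [IsProbabilityMeasure P]
    [IsProbabilityMeasure Q] (hP : ∀ᵐ x ∂P, ‖x‖ ≤ 1) (hQ : ∀ᵐ x ∂Q, ‖x‖ ≤ 1)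
    (h : ∀ c : E, ‖c‖ = 1 → ∀ μ ∈ Icc (-1 : ℝ) 1,
      ∫ x, max (⟪c, x⟫ + μ) 0 ∂P = ∫ x, max (⟪c, x⟫ + μ) 0 ∂Q) : P = Q := by
  refine Measure.ext_of_map_inner_eq fun c hc => ?_
  have hinner : Continuous fun x : E => ⟪c, x⟫ := by fun_prop
  have hsupport : ∀ ν : Measure E, (∀ᵐ x ∂ν, ‖x‖ ≤ 1) →
      ∀ᵐ s ∂(ν.map fun x => ⟪c, x⟫), s ∈ Icc (-1 : ℝ) 1 := fun ν hν => by
    refine (ae_map_iff hinner.aemeasurable measurableSet_Icc).2 ?_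
    filter_upwards [hν] with x hx
    have hx' : |⟪c, x⟫| ≤ 1 := (abs_real_inner_le_norm c x).trans (by rwa [hc, one_mul])
    exact abs_le.1 hx'
  have := isProbabilityMeasure_map (μ := P) hinner.aemeasurable
  have := isProbabilityMeasure_map (μ := Q) hinner.aemeasurable
  refine Measure.ext_of_integral_relu_eq (hsupport P hP) (hsupport Q hQ) fun t ht => ?_
  rw [integral_map hinner.aemeasurable (by fun_prop),
    integral_map hinner.aemeasurable (by fun_prop)]
  simpa only [sub_eq_add_neg] using h c hc (-t) ⟨neg_le_neg ht.2, by linarith [ht.1]⟩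

end InnerProductSpace

theorem Real.iSup_eq_zero_iff_of_nonneg {ι : Sort*} {f : ι → ℝ} (hf₀ : ∀ i, 0 ≤ f i)
    (hf : BddAbove (range f)) : ⨆ i, f i = 0 ↔ ∀ i, f i = 0 := by
  refine ⟨fun h i => le_antisymm (h ▸ le_ciSup hf i) (hf₀ i), fun h => ?_⟩
  simp [h]

theorem stmt_3 (d : ℕ) (P Q : Measure (EuclideanSpace ℝ (Fin d)))
    [IsProbabilityMeasure P] [IsProbabilityMeasure Q]
    (hP : P (Metric.closedBall 0 1)ᶜ = 0) (hQ : Q (Metric.closedBall 0 1)ᶜ = 0) :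
    (⨆ p : Metric.sphere (0 : EuclideanSpace ℝ (Fin d)) 1 × Set.Icc (-1 : ℝ) 1,
        |(∫ x, max (⟪(p.1 : EuclideanSpace ℝ (Fin d)), x⟫ + (p.2 : ℝ)) 0 ∂P) -
          ∫ x, max (⟪(p.1 : EuclideanSpace ℝ (Fin d)), x⟫ + (p.2 : ℝ)) 0 ∂Q|) = 0
      ↔ P = Q := by
  have hP' : ∀ᵐ x ∂P, ‖x‖ ≤ 1 := by
    filter_upwards [compl_mem_ae_iff.2 hP] with x hx
    simpa using hx
  have hQ' : ∀ᵐ x ∂Q, ‖x‖ ≤ 1 := by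
    filter_upwards [compl_mem_ae_iff.2 hQ] with x hx
    simpa using hx
  have hbdd : BddAbove (range fun p : Metric.sphere (0 : EuclideanSpace ℝ (Fin d)) 1 ×
      Set.Icc (-1 : ℝ) 1 =>
      |(∫ x, max (⟪(p.1 : EuclideanSpace ℝ (Fin d)), x⟫ + (p.2 : ℝ)) 0 ∂P) -
        ∫ x, max (⟪(p.1 : EuclideanSpace ℝ (Fin d)), x⟫ + (p.2 : ℝ)) 0 ∂Q|) := by
    refine ⟨4, ?_⟩
    rintro _ ⟨⟨c, μ⟩, rfl⟩
    have hc : ‖(c : EuclideanSpace ℝ (Fin d))‖ ≤ 1 := (norm_eq_of_mem_sphere c).le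
    have hμ : |(μ : ℝ)| ≤ 1 := abs_le.2 μ.2
    refine (abs_sub _ _).trans ?_
    linarith [abs_integral_relu_inner_le_two P hP' hc hμ,
      abs_integral_relu_inner_le_two Q hQ' hc hμ]
  rw [Real.iSup_eq_zero_iff_of_nonneg (fun _ => abs_nonneg _) hbdd]
  refine ⟨fun h => Measure.ext_of_integral_relu_inner_eq hP' hQ' fun c hc μ hμ => ?_, ?_⟩
  · exact sub_eq_zero.1 (abs_eq_zero.1 (h (⟨c, mem_sphere_zero_iff_norm.2 hc⟩, ⟨μ, hμ⟩)))
  · rintro rfl p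
    simp
end
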